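/- arXiv:1108.4246 — 4 statements merged into one kernel-verified Lean document; each statement's English description precedes it below -/
import Mathlib

section
/- Define R_d(ρ) := ∫₀^∞ (√ρ − √f(e))_+² de where f(e) = (|S^{d−1}|/(d(2π)^d))·((1+e)^{d/2} − (1−e)_+^{d/2}). Then R_d(ρ) ~ ((2π)^d/(6|S^{d−1}|))·ρ² as ρ → 0⁺, i.e., the ratio R_d(ρ)/ρ² tends to (2π)^d/(6|S^{d−1}|). -/
open MeasureTheory Real

/-- The surface area `|S^{d-1}|` of the unit sphere in `ℝ^d`, expressed as
`d` times the volume of the unit ball. -/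
noncomputable def sphereArea (d : ℕ) : ℝ :=
  d * (volume (Metric.ball (0 : EuclideanSpace ℝ (Fin d)) 1)).toReal

/-- `f(e) = (|S^{d−1}|/(d(2π)^d)) ((1+e)^{d/2} − (1−e)_+^{d/2})`. -/
noncomputable def fvol (d : ℕ) (e : ℝ) : ℝ :=
  sphereArea d / (d * (2 * π) ^ d)
    * ((1 + e) ^ ((d : ℝ) / 2) - (max (1 - e) 0) ^ ((d : ℝ) / 2))

/-- `R_d(ρ) = ∫₀^∞ (√ρ − √f(e))_+² de`. -/
noncomputable def Rfun (d : ℕ) (ρ : ℝ) : ℝ :=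
  ∫ e in Set.Ioi (0 : ℝ), (max (Real.sqrt ρ - Real.sqrt (fvol d e)) 0) ^ 2

open Set Filter Topology

/-! The substitution `e = ρ u` turns `R_d(ρ) / ρ²` into `∫₀^∞ (1 - √(f(ρu)/ρ))₊² du`. As
`f(0) = 0` and `f'(0) = a`, the integrand tends to `(1 - √(au))₊²`, whose integral is `1 / (6a)`.
A lower bound `f(e) ≥ c min(e, 1)` makes every integrand vanish for `u > 1/c` once `ρ < c`, so
dominated convergence applies. -/

lemma max_one_sub_sqrt_sq_le_one (t : ℝ) : max (1 - √t) 0 ^ 2 ≤ 1 := by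
  have h : max (1 - √t) 0 ≤ 1 := max_le (by linarith [sqrt_nonneg t]) zero_le_one
  nlinarith [le_max_right (1 - √t) 0]

lemma max_one_sub_sqrt_sq_of_one_le {t : ℝ} (ht : 1 ≤ t) : max (1 - √t) 0 ^ 2 = 0 := by
  rw [max_eq_right (by linarith [one_le_sqrt.2 ht])]
  norm_num

lemma max_sqrt_sub_sqrt_sq_eq {ρ : ℝ} (hρ : 0 < ρ) (x : ℝ) :
    max (√ρ - √x) 0 ^ 2 = ρ * max (1 - √(x / ρ)) 0 ^ 2 := by
  have hs : 0 < √ρ := sqrt_pos.2 hρ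
  have h : max (√ρ - √x) 0 = √ρ * max (1 - √(x / ρ)) 0 := by
    rw [mul_max_of_nonneg _ _ hs.le, mul_zero, mul_sub, mul_one, sqrt_div' x hρ.le,
      mul_div_cancel₀ _ hs.ne']
  rw [h, mul_pow, sq_sqrt hρ.le]

lemma setIntegral_max_sqrt_sub_sqrt_sq_eq (g : ℝ → ℝ) {ρ : ℝ} (hρ : 0 < ρ) :
    ∫ e in Ioi 0, max (√ρ - √(g e)) 0 ^ 2 =
      ρ ^ 2 * ∫ u in Ioi 0, max (1 - √(g (ρ * u) / ρ)) 0 ^ 2 := by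
  have hsub := integral_comp_mul_left_Ioi (fun e => max (√ρ - √(g e)) 0 ^ 2) 0 hρ
  rw [mul_zero, smul_eq_mul] at hsub
  calc ∫ e in Ioi 0, max (√ρ - √(g e)) 0 ^ 2
      = ρ * ∫ u in Ioi 0, max (√ρ - √(g (ρ * u))) 0 ^ 2 := by
        rw [hsub, mul_inv_cancel_left₀ hρ.ne']
    _ = ρ ^ 2 * ∫ u in Ioi 0, max (1 - √(g (ρ * u) / ρ)) 0 ^ 2 := by
        simp_rw [max_sqrt_sub_sqrt_sq_eq hρ, integral_const_mul]
        ring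

lemma integral_max_one_sub_sqrt_sq : ∫ v in Ioi (0 : ℝ), max (1 - √v) 0 ^ 2 = 1 / 6 := by
  have hsupp : ∫ v in Ioi (0 : ℝ), max (1 - √v) 0 ^ 2 =
      ∫ v in (0 : ℝ)..1, max (1 - √v) 0 ^ 2 := by
    rw [intervalIntegral.integral_of_le zero_le_one]
    refine setIntegral_eq_of_subset_of_forall_sdiff_eq_zero measurableSet_Ioi
      Ioc_subset_Ioi_self fun v hv => max_one_sub_sqrt_sq_of_one_le ?_
    by_contra! h
    exact hv.2 ⟨hv.1, h.le⟩
  have hpoly : ∫ v in (0 : ℝ)..1, max (1 - √v) 0 ^ 2 =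
      ∫ v in (0 : ℝ)..1, (1 - 2 * v ^ (1 / 2 : ℝ) + v) := by
    refine intervalIntegral.integral_congr fun v hv => ?_
    rw [uIcc_of_le zero_le_one] at hv
    rw [max_eq_left (by linarith [sqrt_le_one.2 hv.2]), sub_sq, sq_sqrt hv.1, sqrt_eq_rpow]
    ring
  have hsqrt : ∫ v in (0 : ℝ)..1, v ^ (1 / 2 : ℝ) = 2 / 3 := by
    rw [integral_rpow (Or.inl (by norm_num))]
    norm_num
  rw [hsupp, hpoly, intervalIntegral.integral_add, intervalIntegral.integral_sub,
    intervalIntegral.integral_const_mul, hsqrt, integral_id]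
  · norm_num
  all_goals exact Continuous.intervalIntegrable (by fun_prop (disch := norm_num)) _ _

lemma integral_max_one_sub_sqrt_mul_sq {a : ℝ} (ha : 0 < a) :
    ∫ u in Ioi (0 : ℝ), max (1 - √(a * u)) 0 ^ 2 = 1 / (6 * a) := by
  rw [integral_comp_mul_left_Ioi (fun v => max (1 - √v) 0 ^ 2) 0 ha, mul_zero,
    integral_max_one_sub_sqrt_sq, smul_eq_mul]
  field_simp

section Rescaling

variable {g : ℝ → ℝ} {a c : ℝ}

lemma tendsto_comp_mul_div_of_hasDerivAt_zero (hg0 : g 0 = 0) (hga : HasDerivAt g a 0) (u : ℝ) :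
    Tendsto (fun ρ => g (ρ * u) / ρ) (𝓝[≠] 0) (𝓝 (a * u)) := by
  have hgu : HasDerivAt (fun ρ => g (ρ * u)) (a * u) 0 :=
    hga.comp_of_eq 0 (hasDerivAt_mul_const u) (zero_mul u).symm
  convert hgu.tendsto_slope_zero using 2 with ρ
  simp [hg0, div_eq_inv_mul]

lemma max_one_sub_sqrt_comp_mul_div_sq_le_indicator (hc : 0 < c)
    (hlow : ∀ e, 0 ≤ e → c * min e 1 ≤ g e) {ρ : ℝ} (hρ : ρ ∈ Ioo 0 c) {u : ℝ} (hu : 0 < u) :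
    max (1 - √(g (ρ * u) / ρ)) 0 ^ 2 ≤ (Ioc 0 c⁻¹).indicator 1 u := by
  by_cases huc : u ≤ c⁻¹
  · simpa [indicator_of_mem (show u ∈ Ioc 0 c⁻¹ from ⟨hu, huc⟩)]
      using max_one_sub_sqrt_sq_le_one _
  · rw [indicator_of_notMem fun h => huc h.2]
    refine (max_one_sub_sqrt_sq_of_one_le ((one_le_div hρ.1).2 ?_)).le
    refine le_trans ?_ (hlow _ (mul_pos hρ.1 hu).le)
    rw [mul_min_of_nonneg _ _ hc.le, mul_one]
    refine le_min ?_ hρ.2.le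
    have : 1 ≤ u * c := by rw [not_le, inv_lt_iff_one_lt_mul₀ hc] at huc; exact huc.le
    nlinarith [hρ.1]

theorem tendsto_setIntegral_max_one_sub_sqrt_comp_mul_div_sq (hg : Continuous g)
    (hg0 : g 0 = 0) (hga : HasDerivAt g a 0) (hc : 0 < c)
    (hlow : ∀ e, 0 ≤ e → c * min e 1 ≤ g e) :
    Tendsto (fun ρ => ∫ u in Ioi 0, max (1 - √(g (ρ * u) / ρ)) 0 ^ 2) (𝓝[>] 0)
      (𝓝 (∫ u in Ioi 0, max (1 - √(a * u)) 0 ^ 2)) := by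
  refine tendsto_integral_filter_of_dominated_convergence ((Ioc 0 c⁻¹).indicator 1) ?_ ?_ ?_ ?_
  · exact Eventually.of_forall fun ρ => (by fun_prop : Continuous _).aestronglyMeasurable
  · filter_upwards [Ioo_mem_nhdsGT hc] with ρ hρ
    refine (ae_restrict_iff' measurableSet_Ioi).2 (ae_of_all _ fun u hu => ?_)
    rw [Real.norm_of_nonneg (sq_nonneg _)]
    exact max_one_sub_sqrt_comp_mul_div_sq_le_indicator hc hlow hρ hu
  · rw [integrable_indicator_iff measurableSet_Ioc]
    exact integrableOn_const (measure_Ioc_lt_top.trans_le' (Measure.restrict_apply_le _ _)).ne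
  · refine ae_of_all _ fun u => ?_
    have hcont : Continuous fun t : ℝ => max (1 - √t) 0 ^ 2 := by fun_prop
    exact (hcont.tendsto _).comp
      ((tendsto_comp_mul_div_of_hasDerivAt_zero hg0 hga u).mono_left
        (nhdsWithin_mono _ fun _ h => ne_of_gt h))

theorem tendsto_setIntegral_max_sqrt_sub_sqrt_sq_div_sq (hg : Continuous g)
    (hg0 : g 0 = 0) (hga : HasDerivAt g a 0) (ha : 0 < a) (hc : 0 < c)
    (hlow : ∀ e, 0 ≤ e → c * min e 1 ≤ g e) :
    Tendsto (fun ρ => (∫ e in Ioi 0, max (√ρ - √(g e)) 0 ^ 2) / ρ ^ 2) (𝓝[>] 0)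
      (𝓝 (1 / (6 * a))) := by
  rw [← integral_max_one_sub_sqrt_mul_sq ha]
  refine (tendsto_setIntegral_max_one_sub_sqrt_comp_mul_div_sq hg hg0 hga hc hlow).congr' ?_
  filter_upwards [self_mem_nhdsWithin] with ρ hρ
  rw [setIntegral_max_sqrt_sub_sqrt_sq_eq g hρ, mul_div_cancel_left₀ _ (pow_ne_zero 2 hρ.ne')]

end Rescaling

lemma self_le_sqrt_one_add_sub_sqrt_one_sub {e : ℝ} (h0 : 0 ≤ e) (h1 : e ≤ 1) :
    e ≤ √(1 + e) - √(1 - e) := by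
  have hx := sq_sqrt (by linarith : 0 ≤ 1 + e)
  have hy := sq_sqrt (by linarith : 0 ≤ 1 - e)
  have hxy : √(1 - e) ≤ √(1 + e) := sqrt_le_sqrt (by linarith)
  -- `(x - y)(x + y) = 2e` and `x + y ≤ 2` since `x² + y² = 2`
  have hsum : √(1 + e) + √(1 - e) ≤ 2 := by
    nlinarith [sq_nonneg (√(1 + e) - √(1 - e)), sqrt_nonneg (1 + e), sqrt_nonneg (1 - e)]
  nlinarith

lemma self_le_one_add_rpow_sub_one_sub_rpow {e p : ℝ} (hp : 1 / 2 ≤ p) (h0 : 0 ≤ e)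
    (h1 : e ≤ 1) : e ≤ (1 + e) ^ p - (1 - e) ^ p := by
  have hplus : √(1 + e) ≤ (1 + e) ^ p := by
    rw [sqrt_eq_rpow]
    exact rpow_le_rpow_of_exponent_le (by linarith) hp
  have hminus : (1 - e) ^ p ≤ √(1 - e) := by
    rw [sqrt_eq_rpow]
    exact rpow_le_rpow_of_exponent_ge' (by linarith) (by linarith) (by norm_num) hp
  linarith [self_le_sqrt_one_add_sub_sqrt_one_sub h0 h1]

lemma sphereArea_pos {d : ℕ} (hd : 0 < d) : 0 < sphereArea d :=
  mul_pos (Nat.cast_pos.2 hd) (ENNReal.toReal_pos (Metric.measure_ball_pos _ _ one_pos).ne'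
    measure_ball_lt_top.ne)

lemma continuous_fvol (d : ℕ) : Continuous (fvol d) := by
  unfold fvol
  fun_prop (disch := positivity)

lemma fvol_zero (d : ℕ) : fvol d 0 = 0 := by simp [fvol]

lemma hasDerivAt_fvol (d : ℕ) : HasDerivAt (fvol d) (sphereArea d / (2 * π) ^ d) 0 := by
  have hplus : HasDerivAt (fun e : ℝ => (1 + e) ^ ((d : ℝ) / 2)) ((d : ℝ) / 2) 0 := by
    simpa using ((hasDerivAt_id (0 : ℝ)).const_add 1).rpow_const (p := (d : ℝ) / 2)
      (Or.inl (by norm_num))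
  have hminus : HasDerivAt (fun e : ℝ => (1 - e) ^ ((d : ℝ) / 2)) (-((d : ℝ) / 2)) 0 := by
    simpa using ((hasDerivAt_id (0 : ℝ)).const_sub 1).rpow_const (p := (d : ℝ) / 2)
      (Or.inl (by norm_num))
  have hnear : (fun e : ℝ => sphereArea d / (d * (2 * π) ^ d)
      * ((1 + e) ^ ((d : ℝ) / 2) - (1 - e) ^ ((d : ℝ) / 2))) =ᶠ[𝓝 0] fvol d := by
    filter_upwards [Iio_mem_nhds one_pos] with e he
    rw [fvol, max_eq_left (by linarith [mem_Iio.1 he])]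
  refine (((hplus.sub hminus).const_mul _).congr_of_eventuallyEq hnear.symm).congr_deriv ?_
  rcases eq_or_ne (d : ℝ) 0 with hd | hd
  · simp [sphereArea, hd]
  · field_simp
    ring

lemma mul_min_le_fvol {d : ℕ} (hd : 0 < d) {e : ℝ} (he : 0 ≤ e) :
    sphereArea d / (d * (2 * π) ^ d) * min e 1 ≤ fvol d e := by
  have hC : 0 ≤ sphereArea d / (d * (2 * π) ^ d) := by
    have := sphereArea_pos hd
    positivity
  have hp : 1 / 2 ≤ (d : ℝ) / 2 := by
    gcongr
    exact_mod_cast hd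
  refine mul_le_mul_of_nonneg_left ?_ hC
  rcases le_total e 1 with h1 | h1
  · rw [min_eq_left h1, max_eq_left (by linarith)]
    exact self_le_one_add_rpow_sub_one_sub_rpow hp he h1
  · rw [min_eq_right h1, max_eq_right (by linarith), zero_rpow (by linarith), sub_zero]
    exact one_le_rpow (by linarith) (by linarith)

/-- `R_d(ρ) ~ ((2π)^d/(6|S^{d−1}|)) ρ²` as `ρ → 0⁺`. -/
theorem Rfun_asymptotics_zero (d : ℕ) (hd : 1 ≤ d) :
    Filter.Tendsto (fun ρ : ℝ => Rfun d ρ / ρ ^ 2) (nhdsWithin 0 (Set.Ioi 0))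
      (nhds ((2 * π) ^ d / (6 * sphereArea d))) := by
  have hS := sphereArea_pos hd
  have hdR : (0 : ℝ) < d := Nat.cast_pos.2 hd
  have hlim := tendsto_setIntegral_max_sqrt_sub_sqrt_sq_div_sq (continuous_fvol d) (fvol_zero d)
    (hasDerivAt_fvol d) (by positivity) (by positivity) fun e he => mul_min_le_fvol hd he
  rwa [show (2 * π) ^ d / (6 * sphereArea d) = 1 / (6 * (sphereArea d / (2 * π) ^ d)) by
    field_simp]
end

section
/- With R_d and f as above, R_d(ρ) ~ (d/(d+4))·K_sc(d)·ρ^{1+2/d} as ρ → ∞, where K_sc(d) = (d/(d+2))·(d(2π)^d/|S^{d−1}|)^{2/d} is the semiclassical constant (with q = 1). -/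
/-!
For `e ≥ 1` the profile is exactly `f(e) = c (1 + e)^{d/2}` with `c = |S^{d-1}|/(d(2π)^d)`, so
after the shift `x = 1 + e` the integral `R_d(ρ)` differs from the model integral
`N(ρ) = ∫₀^∞ (√ρ − √(c x^{d/2}))₊² dx` only by the contributions of `(0, 1]` and `(0, 2]`, where
the integrand lies in `[0, ρ]`. Hence `|R_d(ρ) − N(ρ)| ≤ 2ρ = o(ρ^{1+2/d})`. The model integral is
explicit: the scaling `x = (ρ/c)^{2/d} t` turns it into `ρ (ρ/c)^{2/d} ∫₀¹ (1 − t^{d/4})² dt`.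
-/

open MeasureTheory Real

/-- The semiclassical constant `K_sc(d)` (with `q = 1`). -/
noncomputable def Ksc (d : ℕ) : ℝ :=
  ((d : ℝ) / (d + 2)) * (d * (2 * π) ^ d / sphereArea d) ^ (2 / (d : ℝ))

open Set Filter Topology

noncomputable def sqrtGap (ρ a : ℝ) : ℝ := max (√ρ - √a) 0 ^ 2

section sqrtGap

variable {ρ a : ℝ}

theorem sqrtGap_nonneg : 0 ≤ sqrtGap ρ a := sq_nonneg _

theorem sqrtGap_le (hρ : 0 ≤ ρ) : sqrtGap ρ a ≤ ρ := by
  have h : max (√ρ - √a) 0 ≤ √ρ := max_le (by linarith [Real.sqrt_nonneg a]) (Real.sqrt_nonneg ρ)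
  calc sqrtGap ρ a ≤ √ρ ^ 2 := pow_le_pow_left₀ (le_max_right _ _) h 2
    _ = ρ := Real.sq_sqrt hρ

theorem sqrtGap_eq_zero (h : ρ ≤ a) : sqrtGap ρ a = 0 := by
  rw [sqrtGap, max_eq_right (sub_nonpos.2 (Real.sqrt_le_sqrt h))]
  exact zero_pow two_ne_zero

theorem sqrtGap_mul_mul {k : ℝ} (hk : 0 ≤ k) : sqrtGap (k * ρ) (k * a) = k * sqrtGap ρ a := by
  have h : max (√k * (√ρ - √a)) 0 = √k * max (√ρ - √a) 0 := by
    rw [mul_max_of_nonneg _ _ (Real.sqrt_nonneg k), mul_zero]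
  rw [sqrtGap, sqrtGap, Real.sqrt_mul hk, Real.sqrt_mul hk, ← mul_sub, h, mul_pow,
    Real.sq_sqrt hk]

theorem sqrtGap_one_of_le (h : a ≤ 1) : sqrtGap 1 a = (1 - √a) ^ 2 := by
  rw [sqrtGap, Real.sqrt_one, max_eq_left (sub_nonneg.2 (Real.sqrt_le_one.2 h))]

theorem continuous_sqrtGap (ρ : ℝ) : Continuous (sqrtGap ρ) := by
  unfold sqrtGap; fun_prop

theorem integrableOn_Ioi_sqrtGap_comp {φ : ℝ → ℝ} (hρ : 0 ≤ ρ) (hφ : Measurable φ)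
    (hφ_large : ∀ᶠ x in atTop, ρ ≤ φ x) (a : ℝ) :
    IntegrableOn (fun x => sqrtGap ρ (φ x)) (Ioi a) := by
  obtain ⟨E, hE⟩ := eventually_atTop.1 hφ_large
  refine IntegrableOn.of_forall_sdiff_eq_zero (s := Ioc a E) ?_ measurableSet_Ioi ?_
  · refine Measure.integrableOn_of_bounded (M := ρ) measure_Ioc_lt_top.ne
      ((continuous_sqrtGap ρ).measurable.comp hφ).aestronglyMeasurable (ae_of_all _ fun x => ?_)
    exact (Real.norm_of_nonneg sqrtGap_nonneg).trans_le (sqrtGap_le hρ)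
  · rintro x ⟨hxa, hxE⟩
    exact sqrtGap_eq_zero (hE x (le_of_lt (not_le.1 fun h => hxE ⟨hxa, h⟩)))

theorem setIntegral_sqrtGap_le {φ : ℝ → ℝ} {s : Set ℝ} (hρ : 0 ≤ ρ) (hs : volume s ≠ ⊤) :
    ∫ x in s, sqrtGap ρ (φ x) ≤ ρ * volume.real s :=
  (le_abs_self _).trans <| norm_setIntegral_le_of_norm_le_const hs.lt_top fun _ _ =>
    (Real.norm_of_nonneg sqrtGap_nonneg).trans_le (sqrtGap_le hρ)

end sqrtGap

theorem setIntegral_comp_add_right_Ioi {E : Type*} [NormedAddCommGroup E] [NormedSpace ℝ E]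
    (g : ℝ → E) (a b : ℝ) : ∫ x in Ioi a, g (x + b) = ∫ x in Ioi (a + b), g x := by
  have h := (measurePreserving_add_right volume b).setIntegral_preimage_emb
    (measurableEmbedding_addRight b) g (Ioi (a + b))
  simpa only [preimage_add_const_Ioi, add_sub_cancel_right] using h

theorem setIntegral_Ioi_eq_Ioc_add_Ioi {E : Type*} [NormedAddCommGroup E] [NormedSpace ℝ E]
    {μ : Measure ℝ} {f : ℝ → E} {a b : ℝ} (hab : a ≤ b) (hf : IntegrableOn f (Ioi a) μ) :
    ∫ x in Ioi a, f x ∂μ = (∫ x in Ioc a b, f x ∂μ) + ∫ x in Ioi b, f x ∂μ := by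
  rw [← Ioc_union_Ioi_eq_Ioi hab, setIntegral_union Ioc_disjoint_Ioi_same measurableSet_Ioi
    (hf.mono_set Ioc_subset_Ioi_self) (hf.mono_set (Ioi_subset_Ioi hab))]

theorem integral_sqrtGap_one_rpow {s : ℝ} (hs : 0 < s) :
    ∫ x in Ioi 0, sqrtGap 1 (x ^ s) = s ^ 2 / ((s + 1) * (s + 2)) := by
  have h_vanish : ∀ x ∈ Ioi (0 : ℝ) \ Ioc 0 1, sqrtGap 1 (x ^ s) = 0 := fun x hx =>
    sqrtGap_eq_zero (Real.one_le_rpow (not_le.1 fun h => hx.2 ⟨hx.1, h⟩).le hs.le)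
  have h_expand : EqOn (fun x => sqrtGap 1 (x ^ s)) (fun x => 1 - 2 * x ^ (s / 2) + x ^ s)
      (Ioc 0 1) := by
    rintro x ⟨hx0, hx1⟩
    have h_sqrt : √(x ^ s) = x ^ (s / 2) := by
      rw [Real.sqrt_eq_rpow, ← Real.rpow_mul hx0.le, mul_one_div]
    have h_sq : (x ^ (s / 2)) ^ 2 = x ^ s := by
      rw [← Real.rpow_natCast, ← Real.rpow_mul hx0.le]; norm_num
    simp only
    rw [sqrtGap_one_of_le (Real.rpow_le_one hx0.le hx1 hs.le), h_sqrt]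
    linear_combination h_sq
  have h_int : ∀ r : ℝ, 0 < r → IntervalIntegrable (fun x : ℝ => x ^ r) volume 0 1 :=
    fun _ hr => intervalIntegral.intervalIntegrable_rpow' (by linarith)
  have h_sqrt_int := (h_int (s / 2) (by positivity)).const_mul 2
  rw [setIntegral_eq_of_subset_of_forall_sdiff_eq_zero measurableSet_Ioi Ioc_subset_Ioi_self
      h_vanish, setIntegral_congr_fun measurableSet_Ioc h_expand,
    ← intervalIntegral.integral_of_le zero_le_one,
    intervalIntegral.integral_add (intervalIntegrable_const.sub h_sqrt_int) (h_int s hs),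
    intervalIntegral.integral_sub intervalIntegrable_const h_sqrt_int,
    intervalIntegral.integral_const_mul,
    integral_rpow (Or.inl (by linarith)), integral_rpow (Or.inl (by linarith)),
    Real.zero_rpow (by positivity), Real.zero_rpow (by positivity), Real.one_rpow,
    Real.one_rpow, intervalIntegral.integral_const, smul_eq_mul]
  field_simp
  ring

theorem integral_sqrtGap_mul_rpow {ρ c s : ℝ} (hρ : 0 < ρ) (hc : 0 < c) (hs : 0 < s) :
    ∫ x in Ioi 0, sqrtGap ρ (c * x ^ s)
      = s ^ 2 / ((s + 1) * (s + 2)) * c ^ (-s⁻¹) * ρ ^ (1 + s⁻¹) := by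
  set X := (ρ / c) ^ s⁻¹ with hX_def
  have hX : 0 < X := by positivity
  have hXs : c * X ^ s = ρ := by
    rw [hX_def, ← Real.rpow_mul (by positivity), inv_mul_cancel₀ hs.ne', Real.rpow_one]
    field_simp
  have h_scale : EqOn (fun t => sqrtGap ρ (c * (X * t) ^ s)) (fun t => ρ * sqrtGap 1 (t ^ s))
      (Ioi 0) := fun t ht => by
    simp only
    rw [Real.mul_rpow hX.le (le_of_lt ht), ← mul_assoc, hXs, ← sqrtGap_mul_mul hρ.le, mul_one]
  have hXρ : X * ρ = c ^ (-s⁻¹) * ρ ^ (1 + s⁻¹) := by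
    rw [hX_def, Real.div_rpow hρ.le hc.le, Real.rpow_neg hc.le, Real.rpow_add hρ, Real.rpow_one]
    ring
  have h_subst := integral_comp_mul_left_Ioi' (fun x => sqrtGap ρ (c * x ^ s)) 0 hX
  rw [mul_zero] at h_subst
  rw [← h_subst, setIntegral_congr_fun measurableSet_Ioi h_scale, integral_const_mul,
    integral_sqrtGap_one_rpow hs, smul_eq_mul, ← mul_assoc, hXρ]
  ring

theorem abs_integral_sqrtGap_sub_le {ρ c s : ℝ} {φ : ℝ → ℝ} (hρ : 0 ≤ ρ) (hc : 0 < c)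
    (hs : 0 < s) (hφ : Measurable φ) (hφ_eq : ∀ e, 1 < e → φ e = c * (1 + e) ^ s) :
    |(∫ e in Ioi 0, sqrtGap ρ (φ e)) - ∫ x in Ioi 0, sqrtGap ρ (c * x ^ s)| ≤ 2 * ρ := by
  have h_grow : Tendsto (fun x => c * x ^ s) atTop atTop :=
    (tendsto_rpow_atTop hs).const_mul_atTop hc
  have hG := integrableOn_Ioi_sqrtGap_comp hρ (by fun_prop) (h_grow.eventually_ge_atTop ρ) 0
  have h_shift_grow : Tendsto (fun e => c * (1 + e) ^ s) atTop atTop :=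
    h_grow.comp (tendsto_atTop_add_const_left _ 1 tendsto_id)
  have hF : IntegrableOn (fun e => sqrtGap ρ (φ e)) (Ioi 0) := by
    refine integrableOn_Ioi_sqrtGap_comp hρ hφ ?_ 0
    filter_upwards [h_shift_grow.eventually_ge_atTop ρ, eventually_gt_atTop 1] with e he he1
    rwa [hφ_eq e he1]
  have h_tail : ∫ e in Ioi 1, sqrtGap ρ (φ e) = ∫ x in Ioi 2, sqrtGap ρ (c * x ^ s) := by
    rw [setIntegral_congr_fun measurableSet_Ioi fun e he => by rw [hφ_eq e he, add_comm],
      setIntegral_comp_add_right_Ioi (fun x => sqrtGap ρ (c * x ^ s))]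
    norm_num
  have hF_head := setIntegral_sqrtGap_le (φ := φ) hρ (measure_Ioc_lt_top (a := 0) (b := 1)).ne
  have hG_head := setIntegral_sqrtGap_le (φ := fun x => c * x ^ s) hρ
    (measure_Ioc_lt_top (a := 0) (b := 2)).ne
  have hF_nonneg : 0 ≤ ∫ e in Ioc 0 1, sqrtGap ρ (φ e) := integral_nonneg fun _ => sqrtGap_nonneg
  have hG_nonneg : 0 ≤ ∫ x in Ioc 0 2, sqrtGap ρ (c * x ^ s) :=
    integral_nonneg fun _ => sqrtGap_nonneg
  norm_num [Real.volume_real_Ioc] at hF_head hG_head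
  rw [setIntegral_Ioi_eq_Ioc_add_Ioi zero_le_one hF, setIntegral_Ioi_eq_Ioc_add_Ioi zero_le_two hG,
    h_tail, abs_le]
  constructor <;> linarith

theorem tendsto_div_rpow_of_abs_sub_le {u : ℝ → ℝ} {K C q : ℝ} (hq : 1 < q)
    (h : ∀ᶠ ρ in atTop, |u ρ - K * ρ ^ q| ≤ C * ρ) :
    Tendsto (fun ρ => u ρ / ρ ^ q) atTop (𝓝 K) := by
  rw [← tendsto_sub_nhds_zero_iff]
  refine squeeze_zero_norm' ?_ (by simpa using (tendsto_rpow_neg_atTop (sub_pos.2 hq)).const_mul C)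
  filter_upwards [h, eventually_gt_atTop 0] with ρ hρ hρ_pos
  have hρq : 0 < ρ ^ q := by positivity
  have h_div : u ρ / ρ ^ q - K = (u ρ - K * ρ ^ q) / ρ ^ q := by field_simp
  rw [Real.norm_eq_abs, h_div, abs_div, abs_of_pos hρq, div_le_iff₀ hρq, mul_assoc,
    ← Real.rpow_add hρ_pos, sub_add_cancel, Real.rpow_one]
  exact hρ

noncomputable def fvolCoeff (d : ℕ) : ℝ := sphereArea d / (d * (2 * π) ^ d)

theorem fvolCoeff_pos {d : ℕ} (hd : d ≠ 0) : 0 < fvolCoeff d := by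
  have h_ball : 0 < (volume (Metric.ball (0 : EuclideanSpace ℝ (Fin d)) 1)).toReal :=
    ENNReal.toReal_pos (Metric.measure_ball_pos volume 0 one_pos).ne' measure_ball_lt_top.ne
  unfold fvolCoeff sphereArea
  positivity

theorem measurable_fvol (d : ℕ) : Measurable (fvol d) := by
  unfold fvol; fun_prop

theorem fvol_of_one_le {d : ℕ} {e : ℝ} (hd : d ≠ 0) (he : 1 ≤ e) :
    fvol d e = fvolCoeff d * (1 + e) ^ ((d : ℝ) / 2) := by
  rw [fvol, max_eq_right (by linarith), Real.zero_rpow (by positivity), sub_zero, fvolCoeff]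

/-- `R_d(ρ) ~ (d/(d+4)) K_sc(d) ρ^{1+2/d}` as `ρ → ∞`. -/
theorem Rfun_asymptotics_infty (d : ℕ) (hd : 1 ≤ d) :
    Filter.Tendsto (fun ρ : ℝ => Rfun d ρ / ρ ^ (1 + 2 / (d : ℝ))) Filter.atTop
      (nhds (((d : ℝ) / (d + 4)) * Ksc d)) := by
  have hd0 : d ≠ 0 := by omega
  have hs : (0 : ℝ) < d / 2 := by positivity
  have hc := fvolCoeff_pos hd0
  have h_exp : 2 / (d : ℝ) = ((d : ℝ) / 2)⁻¹ := (inv_div _ _).symm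
  have h_const : (d : ℝ) / (d + 4) * Ksc d
      = ((d : ℝ) / 2) ^ 2 / (((d : ℝ) / 2 + 1) * ((d : ℝ) / 2 + 2))
        * fvolCoeff d ^ (-((d : ℝ) / 2)⁻¹) := by
    rw [Ksc, Real.rpow_neg hc.le, ← Real.inv_rpow hc.le, fvolCoeff, inv_div, ← h_exp]
    field_simp
    ring
  rw [h_const, h_exp]
  refine tendsto_div_rpow_of_abs_sub_le (C := 2) (lt_add_of_pos_right 1 (inv_pos.2 hs)) ?_
  filter_upwards [eventually_gt_atTop 0] with ρ hρ
  rw [← integral_sqrtGap_mul_rpow hρ hc hs]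
  exact abs_integral_sqrtGap_sub_le hρ.le hc hs (measurable_fvol d)
    fun e he => fvol_of_one_le hd0 he.le
end

section
/- The one-dimensional function Φ₁(x) := ∫_{−1}^{min(1, x−1)} dv / (√(1−v²)·√((v−x)²−1)), defined for x > 0, satisfies Φ₁(x) ~ −(1/2)·log|x−2| as x → 2; in particular Φ₁ is unbounded in every neighborhood of x = 2. -/
/-!
On `(-1, m]`, `m = min 1 (x - 1)`, the radicand factors as
`(1 - v²)((v - x)² - 1) = (m - v)(m - v + ε) · (v + 1)(x + 1 - v)` with `ε = |x - 2|`.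
The first factor carries the singularity: `∫ dv / √((m - v)(m - v + ε))` over `(-1, m]`
has the closed form `2 log (√(m + 1) + √(m + 1 + ε)) - log ε`. By AM–GM the second factor
contributes at least `2 / (x + 2)`, and at most `1 / √(2(m + 1))` plus an error
`2 (m - v) / √(v + 1)` whose product with the first factor stays integrable uniformly in `x`.
Both coefficients tend to `1/2` as `x → 2`, so `Φ₁(x) = (1/2 + o(1)) · (-log |x - 2|) + O(1)`.
-/

open Real

/-- `Φ₁(x) = ∫_{−1}^{min(1, x−1)} dv/(√(1−v²) √((v−x)²−1))`. -/
noncomputable def Phi1 (x : ℝ) : ℝ :=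
  ∫ v in Set.Ioc (-1 : ℝ) (min 1 (x - 1)),
    (Real.sqrt (1 - v ^ 2) * Real.sqrt ((v - x) ^ 2 - 1))⁻¹

open MeasureTheory Set Filter Topology

theorem integrableOn_and_integral_eq_sub_of_hasDerivAt_of_nonneg {F f : ℝ → ℝ} {a b : ℝ}
    (hab : a ≤ b) (hcont : ContinuousOn F (Icc a b))
    (hderiv : ∀ x ∈ Ioo a b, HasDerivAt F (f x) x) (hf : ∀ x ∈ Ioo a b, 0 ≤ f x) :
    IntegrableOn f (Ioc a b) ∧ ∫ x in Ioc a b, f x = F b - F a := by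
  have hint := intervalIntegral.integrableOn_deriv_of_nonneg hcont hderiv hf
  refine ⟨hint, ?_⟩
  rw [← intervalIntegral.integral_of_le hab]
  exact intervalIntegral.integral_eq_sub_of_hasDerivAt_of_le hab hcont hderiv
    ((intervalIntegrable_iff_integrableOn_Ioc_of_le hab).2 hint)

theorem integrableOn_and_integral_inv_sqrt_sub {a b : ℝ} (hab : a ≤ b) :
    IntegrableOn (fun v => (√(v - a))⁻¹) (Ioc a b) ∧
      ∫ v in Ioc a b, (√(v - a))⁻¹ = 2 * √(b - a) := by
  have key := integrableOn_and_integral_eq_sub_of_hasDerivAt_of_nonneg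
    (F := fun v => 2 * √(v - a)) (f := fun v => (√(v - a))⁻¹)
    hab (by fun_prop) (fun v hv => ?_) (fun v _ => by positivity)
  · simpa using key
  refine ((((hasDerivAt_id' v).sub_const a).sqrt (sub_pos.2 hv.1).ne').const_mul 2).congr_deriv ?_
  field_simp

theorem integrableOn_and_integral_inv_sqrt_mul_sub_add {a b ε : ℝ} (hab : a ≤ b)
    (hε : 0 < ε) :
    IntegrableOn (fun v => (√((b - v) * (b - v + ε)))⁻¹) (Ioc a b) ∧
      ∫ v in Ioc a b, (√((b - v) * (b - v + ε)))⁻¹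
        = 2 * log (√(b - a) + √(b - a + ε)) - log ε := by
  have hsum : ∀ v ∈ Icc a b, 0 < √(b - v) + √(b - v + ε) := fun v hv => by
    have : 0 < √(b - v + ε) := sqrt_pos.2 (by linarith [hv.2])
    positivity
  have key := integrableOn_and_integral_eq_sub_of_hasDerivAt_of_nonneg
    (F := fun v => -2 * log (√(b - v) + √(b - v + ε)))
    (f := fun v => (√((b - v) * (b - v + ε)))⁻¹) hab
    (continuousOn_const.mul (ContinuousOn.log (by fun_prop) fun v hv => (hsum v hv).ne'))
    (fun v hv => ?_) (fun v _ => by positivity)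
  · refine ⟨key.1, key.2.trans ?_⟩
    simp only [sub_self, sqrt_zero, zero_add, log_sqrt hε.le, neg_mul, sub_neg_eq_add]
    ring
  have h1 : 0 < b - v := sub_pos.2 hv.2
  have h2 : 0 < b - v + ε := by linarith
  have hd := ((((hasDerivAt_id' v).const_sub b).sqrt h1.ne').add
    ((((hasDerivAt_id' v).const_sub b).add_const ε).sqrt h2.ne')).log
    (hsum v (Ioo_subset_Icc_self hv)).ne'
  refine (hd.const_mul (-2)).congr_deriv ?_
  simp only [Pi.add_apply]
  rw [sqrt_mul h1.le]
  field_simp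
  ring

theorem inv_sqrt_le_inv_sqrt_add {a b : ℝ} (ha : 0 < a) (hab : a ≤ b) (hb : 1 ≤ b) :
    (√a)⁻¹ ≤ (√b)⁻¹ + (b - a) * (√a)⁻¹ := by
  have hs := sqrt_pos.2 ha
  have hst : √a ≤ √b := sqrt_le_sqrt hab
  have ht : 1 ≤ √b := one_le_sqrt.2 hb
  rw [show b - a = √b ^ 2 - √a ^ 2 by rw [sq_sqrt ha.le, sq_sqrt (ha.le.trans hab)]]
  field_simp
  nlinarith [mul_nonneg (sub_nonneg.2 hst) (sub_nonneg.2 ht)]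

theorem inv_sqrt_mul_add_mul_le_one {d ε : ℝ} (hd : 0 ≤ d) (hε : 0 ≤ ε) :
    (√(d * (d + ε)))⁻¹ * d ≤ 1 := by
  rcases hd.eq_or_lt with rfl | hd
  · simp
  calc (√(d * (d + ε)))⁻¹ * d ≤ (√(d * d))⁻¹ * d := by
        gcongr
        linarith
    _ = 1 := by rw [sqrt_mul_self hd.le, inv_mul_cancel₀ hd.ne']

section Factors

variable {m x ε v : ℝ}

theorem two_div_add_two_le_inv_sqrt (hmx : m ≤ x - 1) (hv : v ∈ Ioc (-1) m) :
    2 / (x + 2) ≤ (√((v + 1) * (x + 1 - v)))⁻¹ := by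
  have hx : 0 < x + 2 := by linarith [hv.1, hv.2]
  calc 2 / (x + 2) = (√(((x + 2) / 2) ^ 2))⁻¹ := by
        rw [sqrt_sq (by positivity), inv_div]
    _ ≤ (√((v + 1) * (x + 1 - v)))⁻¹ := by
        gcongr
        · exact sqrt_pos.2 (mul_pos (by linarith [hv.1]) (by linarith [hv.2]))
        · nlinarith [sq_nonneg (x - 2 * v)]

theorem inv_sqrt_le_add_of_mem_Ioc (hm : 0 ≤ m) (hmx : m ≤ x - 1) (hv : v ∈ Ioc (-1) m) :
    (√((v + 1) * (x + 1 - v)))⁻¹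
      ≤ (√(2 * (m + 1)))⁻¹ + 2 * (m - v) * (√(v + 1))⁻¹ := by
  have hv1 : 0 < v + 1 := by linarith [hv.1]
  calc (√((v + 1) * (x + 1 - v)))⁻¹ ≤ (√(2 * (v + 1)))⁻¹ :=
        inv_anti₀ (by positivity) (sqrt_le_sqrt (by nlinarith [hv.2]))
    _ ≤ (√(2 * (m + 1)))⁻¹ + (2 * (m + 1) - 2 * (v + 1)) * (√(2 * (v + 1)))⁻¹ :=
        inv_sqrt_le_inv_sqrt_add (by positivity) (by linarith [hv.2]) (by linarith)
    _ ≤ (√(2 * (m + 1)))⁻¹ + 2 * (m - v) * (√(v + 1))⁻¹ := by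
        rw [show 2 * (m + 1) - 2 * (v + 1) = 2 * (m - v) by ring]
        gcongr
        · linarith [hv.2]
        · linarith

theorem inv_sqrt_mul_inv_sqrt_le (hm : 0 ≤ m) (hmx : m ≤ x - 1) (hε : 0 ≤ ε)
    (hv : v ∈ Ioc (-1) m) :
    (√((m - v) * (m - v + ε)))⁻¹ * (√((v + 1) * (x + 1 - v)))⁻¹
      ≤ (√(2 * (m + 1)))⁻¹ * (√((m - v) * (m - v + ε)))⁻¹ + 2 * (√(v + 1))⁻¹ := by
  have hg := inv_sqrt_mul_add_mul_le_one (sub_nonneg.2 hv.2) hε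
  set g := (√((m - v) * (m - v + ε)))⁻¹
  calc g * (√((v + 1) * (x + 1 - v)))⁻¹
      ≤ g * ((√(2 * (m + 1)))⁻¹ + 2 * (m - v) * (√(v + 1))⁻¹) := by
        gcongr
        exact inv_sqrt_le_add_of_mem_Ioc hm hmx hv
    _ = (√(2 * (m + 1)))⁻¹ * g + 2 * (g * (m - v)) * (√(v + 1))⁻¹ := by ring
    _ ≤ (√(2 * (m + 1)))⁻¹ * g + 2 * 1 * (√(v + 1))⁻¹ := by gcongr
    _ = _ := by ring

end Factors

theorem one_sub_sq_mul_sq_sub_one_eq (x v : ℝ) :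
    (1 - v ^ 2) * ((v - x) ^ 2 - 1)
      = (min 1 (x - 1) - v) * (min 1 (x - 1) - v + |x - 2|) * ((v + 1) * (x + 1 - v)) := by
  rcases le_total 2 x with hx | hx
  · rw [min_eq_left (by linarith), abs_of_nonneg (by linarith)]
    ring
  · rw [min_eq_right (by linarith), abs_of_nonpos (by linarith)]
    ring

section Phi1

variable {x : ℝ}

theorem Phi1_integrand_eq {v : ℝ} (hv : v ∈ Ioc (-1) (min 1 (x - 1))) :
    (√(1 - v ^ 2) * √((v - x) ^ 2 - 1))⁻¹
      = (√((min 1 (x - 1) - v) * (min 1 (x - 1) - v + |x - 2|)))⁻¹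
        * (√((v + 1) * (x + 1 - v)))⁻¹ := by
  have hv1 : v ≤ 1 := hv.2.trans (min_le_left _ _)
  have hvx : v ≤ x - 1 := hv.2.trans (min_le_right _ _)
  have hm : 0 ≤ min 1 (x - 1) - v := sub_nonneg.2 hv.2
  rw [← sqrt_mul (by nlinarith [hv.1]), one_sub_sq_mul_sq_sub_one_eq,
    sqrt_mul (mul_nonneg hm (by positivity)), mul_inv]

theorem integrableOn_Phi1_integrand (hx : 1 ≤ x) (hx2 : x ≠ 2) :
    IntegrableOn (fun v => (√(1 - v ^ 2) * √((v - x) ^ 2 - 1))⁻¹)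
      (Ioc (-1) (min 1 (x - 1))) := by
  have hm : 0 ≤ min 1 (x - 1) := le_min zero_le_one (by linarith)
  have hg := (integrableOn_and_integral_inv_sqrt_mul_sub_add (by linarith : -1 ≤ min 1 (x - 1))
    (abs_pos.2 (sub_ne_zero.2 hx2))).1
  have hφ := (integrableOn_and_integral_inv_sqrt_sub (by linarith : -1 ≤ min 1 (x - 1))).1
  simp only [sub_neg_eq_add] at hφ
  refine ((hg.const_mul (√(2 * (min 1 (x - 1) + 1)))⁻¹).add (hφ.const_mul 2)).mono'
    (Measurable.aestronglyMeasurable (by fun_prop)) ?_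
  filter_upwards [ae_restrict_mem measurableSet_Ioc] with v hv
  rw [norm_of_nonneg (by positivity), Phi1_integrand_eq hv]
  exact inv_sqrt_mul_inv_sqrt_le hm (min_le_right _ _) (abs_nonneg _) hv

theorem le_Phi1 (hx : 1 ≤ x) (hx2 : x ≠ 2) : 2 / (x + 2) * -log |x - 2| ≤ Phi1 x := by
  have hm : 0 ≤ min 1 (x - 1) := le_min zero_le_one (by linarith)
  obtain ⟨hg, hg_eq⟩ := integrableOn_and_integral_inv_sqrt_mul_sub_add
    (by linarith : -1 ≤ min 1 (x - 1)) (abs_pos.2 (sub_ne_zero.2 hx2))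
  simp only [sub_neg_eq_add] at hg_eq
  set m := min 1 (x - 1)
  set ε := |x - 2|
  have hlog : 0 ≤ log (√(m + 1) + √(m + 1 + ε)) := by
    have : 1 ≤ √(m + 1) := one_le_sqrt.2 (by linarith)
    exact log_nonneg (by linarith [sqrt_nonneg (m + 1 + ε)])
  calc 2 / (x + 2) * -log ε
      ≤ 2 / (x + 2) * (2 * log (√(m + 1) + √(m + 1 + ε)) - log ε) := by
        gcongr
        linarith
    _ = ∫ v in Ioc (-1) m, 2 / (x + 2) * (√((m - v) * (m - v + ε)))⁻¹ := by
        rw [integral_const_mul, hg_eq]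
    _ ≤ Phi1 x := by
        refine setIntegral_mono_on (hg.const_mul _) (integrableOn_Phi1_integrand hx hx2)
          measurableSet_Ioc fun v hv => ?_
        rw [Phi1_integrand_eq hv, mul_comm]
        gcongr
        exact two_div_add_two_le_inv_sqrt (min_le_right _ _) hv

theorem Phi1_le (hx : 1 ≤ x) (hx3 : x ≤ 3) (hx2 : x ≠ 2) :
    Phi1 x ≤ (√(2 * (min 1 (x - 1) + 1)))⁻¹ * (-log |x - 2| + 6) + 8 := by
  have hm : 0 ≤ min 1 (x - 1) := le_min zero_le_one (by linarith)
  have hε : 0 < |x - 2| := abs_pos.2 (sub_ne_zero.2 hx2)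
  obtain ⟨hg, hg_eq⟩ := integrableOn_and_integral_inv_sqrt_mul_sub_add
    (by linarith : -1 ≤ min 1 (x - 1)) hε
  obtain ⟨hφ, hφ_eq⟩ :=
    integrableOn_and_integral_inv_sqrt_sub (by linarith : -1 ≤ min 1 (x - 1))
  simp only [sub_neg_eq_add] at hg_eq hφ hφ_eq
  have hm1 : min 1 (x - 1) ≤ 1 := min_le_left _ _
  have hε1 : |x - 2| ≤ 1 := abs_le.2 ⟨by linarith, by linarith⟩
  set m := min 1 (x - 1)
  set ε := |x - 2|
  have hsqrt : ∀ y ≤ 4, √y ≤ 2 := fun y hy => sqrt_le_iff.2 ⟨zero_le_two, by linarith⟩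
  have hlog : log (√(m + 1) + √(m + 1 + ε)) ≤ 3 := by
    have hpos : 0 < √(m + 1) + √(m + 1 + ε) := by
      have : 0 < √(m + 1 + ε) := sqrt_pos.2 (by linarith)
      positivity
    linarith [log_le_sub_one_of_pos hpos, hsqrt (m + 1) (by linarith),
      hsqrt (m + 1 + ε) (by linarith)]
  calc Phi1 x
      ≤ ∫ v in Ioc (-1) m,
          ((√(2 * (m + 1)))⁻¹ * (√((m - v) * (m - v + ε)))⁻¹ + 2 * (√(v + 1))⁻¹) :=
        setIntegral_mono_on (integrableOn_Phi1_integrand hx hx2)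
          ((hg.const_mul _).add (hφ.const_mul 2)) measurableSet_Ioc fun v hv => by
            rw [Phi1_integrand_eq hv]
            exact inv_sqrt_mul_inv_sqrt_le hm (min_le_right _ _) hε.le hv
    _ = (√(2 * (m + 1)))⁻¹ * (2 * log (√(m + 1) + √(m + 1 + ε)) - log ε)
          + 2 * (2 * √(m + 1)) := by
        rw [integral_add (hg.const_mul _) (hφ.const_mul 2), integral_const_mul,
          integral_const_mul, hg_eq, hφ_eq]
    _ ≤ (√(2 * (m + 1)))⁻¹ * (-log ε + 6) + 8 := by
        have := hsqrt (m + 1) (by linarith)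
        gcongr ?_ * ?_ + ?_
        · linarith
        · linarith

end Phi1

theorem tendsto_neg_log_abs_sub_nhdsNE (a : ℝ) :
    Tendsto (fun x => -log |x - a|) (𝓝[≠] a) atTop := by
  have h : Tendsto (· - a) (𝓝[≠] a) (𝓝[≠] 0) := by
    have := Filter.map_subRight_nhdsNE (c := a) (a := a)
    rw [sub_self] at this
    exact this.le
  simpa [Function.comp_def, log_abs] using
    tendsto_neg_atBot_atTop.comp (tendsto_log_nhdsNE_zero.comp h)

theorem tendsto_Phi1_div_neg_log :
    Tendsto (fun x => Phi1 x / -log |x - 2|) (𝓝[≠] 2) (𝓝 (1 / 2)) := by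
  have hL := tendsto_neg_log_abs_sub_nhdsNE 2
  have hlow : Tendsto (fun x : ℝ => 2 / (x + 2)) (𝓝[≠] 2) (𝓝 (1 / 2)) := by
    have : ContinuousAt (fun x : ℝ => 2 / (x + 2)) 2 := by fun_prop (disch := norm_num)
    convert this.tendsto.mono_left nhdsWithin_le_nhds using 2
    norm_num
  have hup : Tendsto (fun x => (√(2 * (min 1 (x - 1) + 1)))⁻¹ * (1 + 6 / -log |x - 2|)
      + 8 / -log |x - 2|) (𝓝[≠] 2) (𝓝 (1 / 2)) := by
    have hb : ContinuousAt (fun x : ℝ => (√(2 * (min 1 (x - 1) + 1)))⁻¹) 2 := by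
      fun_prop (disch := norm_num)
    convert (hb.tendsto.mono_left nhdsWithin_le_nhds).mul
      (tendsto_const_nhds.add (tendsto_const_nhds.div_atTop hL)) |>.add
      (tendsto_const_nhds.div_atTop hL) using 2
    rw [show (2 : ℝ) * (min 1 (2 - 1) + 1) = 2 ^ 2 by norm_num, sqrt_sq zero_le_two]
    norm_num
  have hIcc : ∀ᶠ x in 𝓝[≠] (2 : ℝ), x ∈ Icc (1 : ℝ) 3 :=
    mem_nhdsWithin_of_mem_nhds (Icc_mem_nhds (by norm_num) (by norm_num))
  have hev : ∀ᶠ x in 𝓝[≠] 2, x ∈ Icc (1 : ℝ) 3 ∧ x ≠ 2 ∧ 0 < -log |x - 2| :=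
    hIcc.and (eventually_mem_nhdsWithin.and (hL.eventually_gt_atTop 0))
  refine tendsto_of_tendsto_of_tendsto_of_le_of_le' hlow hup ?_ ?_
  · filter_upwards [hev] with x ⟨hx, hx2, hpos⟩
    rw [le_div_iff₀ hpos]
    exact le_Phi1 hx.1 hx2
  · filter_upwards [hev] with x ⟨hx, hx2, hpos⟩
    rw [div_le_iff₀ hpos]
    have hlog : log |x - 2| ≠ 0 := (neg_pos.1 hpos).ne
    refine (Phi1_le hx.1 hx.2 hx2).trans_eq ?_
    field_simp
    ring

/-- `Φ₁(x) ~ −(1/2) log|x−2|` as `x → 2`; in particular `Φ₁` is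
unbounded in every neighborhood of `x = 2`. -/
theorem Phi1_asymptotics_two :
    Filter.Tendsto (fun x : ℝ => Phi1 x / (-Real.log |x - 2|))
      (nhdsWithin 2 {x : ℝ | x ≠ 2}) (nhds (1 / 2)) ∧
    ∀ ε > 0, ∀ M : ℝ, ∃ x : ℝ, 0 < x ∧ x ≠ 2 ∧ |x - 2| < ε ∧ M < Phi1 x := by
  refine ⟨tendsto_Phi1_div_neg_log, fun ε hε M => ?_⟩
  have hΦ : Tendsto Phi1 (𝓝[≠] 2) atTop :=
    (tendsto_neg_log_abs_sub_nhdsNE 2).num one_half_pos tendsto_Phi1_div_neg_log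
  have hball : ∀ᶠ x in 𝓝[≠] (2 : ℝ), x ∈ Metric.ball 2 (min ε 2) :=
    mem_nhdsWithin_of_mem_nhds (Metric.ball_mem_nhds 2 (lt_min hε two_pos))
  obtain ⟨x, hM, hx, hx2⟩ :=
    ((hΦ.eventually_gt_atTop M).and (hball.and eventually_mem_nhdsWithin)).exists
  rw [Metric.mem_ball, Real.dist_eq, lt_min_iff] at hx
  exact ⟨x, by linarith [neg_abs_le (x - 2)], hx2, hx.1, hM⟩
end

section
/- The function Φ₁ satisfies Φ₁(x) ~ π/x as x → ∞, where Φ₁(x) = ∫_{−1}^{1} dv/(√(1−v²)·√((v−x)²−1)) for x > 2. -/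
/-!
Pull `x` under the integral: `x · Φ₁(x) = ∫ (1 - v²)^{-1/2} · x ((v - x)² - 1)^{-1/2} dv`.
The second factor tends to `1` for every `v` and is at most `2` once `x ≥ 3` and `v ≤ 1`,
so dominated convergence (with the integrable majorant `2 (1 - v²)^{-1/2}`, the derivative
of `2 arcsin`) gives the limit `∫_{-1}^{1} (1 - v²)^{-1/2} dv = arcsin 1 - arcsin (-1) = π`.
-/

open Real MeasureTheory Filter Topology Set

lemma hasDerivAt_arcsin_of_mem_Ioo {v : ℝ} (hv : v ∈ Ioo (-1 : ℝ) 1) :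
    HasDerivAt arcsin (√(1 - v ^ 2))⁻¹ v := by
  simpa only [one_div] using hasDerivAt_arcsin hv.1.ne' hv.2.ne

lemma integrableOn_inv_sqrt_one_sub_sq :
    IntegrableOn (fun v : ℝ => (√(1 - v ^ 2))⁻¹) (Ioc (-1) 1) :=
  intervalIntegral.integrableOn_deriv_of_nonneg continuous_arcsin.continuousOn
    (fun _ hv => hasDerivAt_arcsin_of_mem_Ioo hv) (fun _ _ => by positivity)

lemma integral_inv_sqrt_one_sub_sq : ∫ v in Ioc (-1 : ℝ) 1, (√(1 - v ^ 2))⁻¹ = π := by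
  have hint : IntervalIntegrable (fun v : ℝ => (√(1 - v ^ 2))⁻¹) volume (-1) 1 :=
    (intervalIntegrable_iff_integrableOn_Ioc_of_le (by norm_num)).2
      integrableOn_inv_sqrt_one_sub_sq
  rw [← intervalIntegral.integral_of_le (by norm_num),
    intervalIntegral.integral_eq_sub_of_hasDerivAt_of_le (by norm_num)
      continuous_arcsin.continuousOn (fun _ hv => hasDerivAt_arcsin_of_mem_Ioo hv) hint,
    arcsin_one, arcsin_neg_one]
  ring

lemma mul_inv_sqrt_sub_sq_sub_one_le_two {v x : ℝ} (hv : v ≤ 1) (hx : 3 ≤ x) :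
    x * (√((v - x) ^ 2 - 1))⁻¹ ≤ 2 := by
  have hsqrt : x / 2 ≤ √((v - x) ^ 2 - 1) := Real.le_sqrt_of_sq_le (by nlinarith)
  rw [← div_eq_mul_inv, div_le_iff₀ (by linarith)]
  linarith

lemma tendsto_mul_inv_sqrt_sub_sq_sub_one (v : ℝ) :
    Tendsto (fun x : ℝ => x * (√((v - x) ^ 2 - 1))⁻¹) atTop (𝓝 1) := by
  have hquot : Tendsto (fun x : ℝ => (v * x⁻¹ - 1) ^ 2 - x⁻¹ ^ 2) atTop (𝓝 1) := by
    simpa using (((tendsto_inv_atTop_zero.const_mul v).sub_const 1).pow 2).sub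
      (tendsto_inv_atTop_zero.pow 2)
  have hlim : Tendsto (fun x : ℝ => (√((v * x⁻¹ - 1) ^ 2 - x⁻¹ ^ 2))⁻¹) atTop (𝓝 1) := by
    simpa using hquot.sqrt.inv₀ (by norm_num)
  refine hlim.congr' ?_
  filter_upwards [eventually_gt_atTop 0] with x hx
  have hquot_eq : (v * x⁻¹ - 1) ^ 2 - x⁻¹ ^ 2 = ((v - x) ^ 2 - 1) / x ^ 2 := by
    field_simp
  rw [hquot_eq, sqrt_div' _ (sq_nonneg x), sqrt_sq hx.le, inv_div, div_eq_mul_inv]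

/-- `Φ₁(x) = ∫_{−1}^{1} dv/(√(1−v²) √((v−x)²−1))` satisfies
`Φ₁(x) ~ π/x` as `x → ∞`, i.e. `x Φ₁(x) → π`. -/
theorem Phi1_asymptotics_infty :
    Filter.Tendsto
      (fun x : ℝ => x * ∫ v in Set.Ioc (-1 : ℝ) 1,
        (Real.sqrt (1 - v ^ 2) * Real.sqrt ((v - x) ^ 2 - 1))⁻¹)
      Filter.atTop (nhds π) := by
  set w : ℝ → ℝ := fun v => (√(1 - v ^ 2))⁻¹
  set k : ℝ → ℝ → ℝ := fun x v => x * (√((v - x) ^ 2 - 1))⁻¹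
  have hsplit : ∀ x v : ℝ, x * (√(1 - v ^ 2) * √((v - x) ^ 2 - 1))⁻¹ = w v * k x v := by
    intro x v
    simp only [w, k, mul_inv]
    ring
  simp_rw [← integral_const_mul, hsplit, ← integral_inv_sqrt_one_sub_sq]
  refine tendsto_integral_filter_of_dominated_convergence (fun v => w v * 2)
    (Eventually.of_forall fun x => by fun_prop) ?_
    (integrableOn_inv_sqrt_one_sub_sq.mul_const 2)
    (ae_of_all _ fun v => by simpa using (tendsto_mul_inv_sqrt_sub_sq_sub_one v).const_mul (w v))
  filter_upwards [eventually_ge_atTop 3] with x hx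
  filter_upwards [ae_restrict_mem measurableSet_Ioc] with v hv
  rw [Real.norm_of_nonneg (by positivity)]
  exact mul_le_mul_of_nonneg_left (mul_inv_sqrt_sub_sq_sub_one_le_two hv.2 hx) (by positivity)
end
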